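/- arXiv:1905.13196 — 5 statements merged into one kernel-verified Lean document; each statement's English description precedes it below -/
import Mathlib

section
/- Let A, B, C be non-collinear points in the Euclidean plane with longest side BC of length a, and let M be the midpoint of BC. If a/2 < d(A, M), then the circumcenter of triangle ABC lies in the interior of the triangle. -/
/-!
Write `O = A + x • (B - A) + y • (C - A)`. Equidistance from `A`, `B`, `C` is a linear system for
`(x, y)` whose matrix is the Gram matrix of `B - A`, `C - A`; by Cramer's rule the barycentric
coordinates `1 - x - y`, `x`, `y` of `O` are positive multiples of the inner products
`⟪B - A, C - A⟫`, `⟪A - B, C - B⟫`, `⟪A - C, B - C⟫`, so `O` is interior as soon as the triangle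
is acute. By Apollonius, `a / 2 < AM` says that the angle at `A` is acute, and
`⟪A - B, C - B⟫ - ⟪B - A, C - A⟫ = BC² - AC² ≥ 0` (similarly at `C`) transfers this to the other
two angles because `BC` is the longest side.
-/

open Set Module
open scoped RealInnerProductSpace

lemma pos_of_gram_system {a b p x y : ℝ} (hab : p * p ≤ a * b)
    (hxa : x * a + y * p = a / 2) (hyb : x * p + y * b = b / 2)
    (hp : 0 < p) (hpa : p < a) (hpb : p < b) :
    0 < x ∧ 0 < y ∧ x + y < 1 := by
  have hG : 0 ≤ a * b - p * p := sub_nonneg.mpr hab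
  have hx : x * (a * b - p * p) = b * (a - p) / 2 := by linear_combination b * hxa - p * hyb
  have hy : y * (a * b - p * p) = a * (b - p) / 2 := by linear_combination a * hyb - p * hxa
  have hz : (1 - x - y) * (a * b - p * p) = p * ((a - p) + (b - p)) / 2 := by
    linear_combination (p - b) * hxa + (p - a) * hyb
  refine ⟨pos_of_mul_pos_left ?_ hG, pos_of_mul_pos_left ?_ hG,
    sub_pos.mp (sub_sub 1 x y ▸ pos_of_mul_pos_left ?_ hG)⟩
  · have : 0 < b := by linarith
    rw [hx]
    positivity
  · have : 0 < a := by linarith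
    rw [hy]
    positivity
  · have : 0 < a - p + (b - p) := by linarith
    rw [hz]
    positivity

section InnerProductSpace

variable {V : Type*} [NormedAddCommGroup V] [InnerProductSpace ℝ V]

lemma inner_eq_half_norm_sq_of_norm_sub_eq {q u : V} (h : ‖q - u‖ = ‖q‖) :
    ⟪q, u⟫ = ‖u‖ ^ 2 / 2 := by
  have := congrArg (· ^ 2) h
  simp only [norm_sub_sq_real] at this
  linarith

lemma inner_sub_inner_eq_dist_sq_sub_dist_sq (A B C : V) :
    ⟪A - B, C - B⟫ - ⟪B - A, C - A⟫ = dist B C ^ 2 - dist A C ^ 2 := by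
  rw [dist_eq_norm, dist_eq_norm, show B - C = (B - A) - (C - A) by abel, norm_sub_sq_real,
    ← neg_sub C A, norm_neg, ← neg_sub B A, show C - B = (C - A) - (B - A) by abel,
    inner_neg_left, inner_sub_right, real_inner_self_eq_norm_sq, real_inner_comm]
  ring

lemma inner_sub_eq_dist_midpoint_sq_sub (A B C : V) :
    ⟪B - A, C - A⟫ = dist A (midpoint ℝ B C) ^ 2 - (dist B C / 2) ^ 2 := by
  have apollonius :=
    EuclideanGeometry.dist_sq_add_dist_sq_eq_two_mul_dist_midpoint_sq_add_half_dist_sq A B C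
  have law_cos : dist B C ^ 2 = ‖B - A‖ ^ 2 - 2 * ⟪B - A, C - A⟫ + ‖C - A‖ ^ 2 := by
    rw [dist_eq_norm, show B - C = (B - A) - (C - A) by abel, norm_sub_sq_real]
  rw [dist_comm A B, dist_comm A C, dist_eq_norm B A, dist_eq_norm C A] at apollonius
  linarith

lemma pos_of_inner_smul_add_smul_eq_half {u v : V} {x y : ℝ}
    (hu : ⟪x • u + y • v, u⟫ = ‖u‖ ^ 2 / 2) (hv : ⟪x • u + y • v, v⟫ = ‖v‖ ^ 2 / 2)
    (huv : 0 < ⟪u, v⟫) (hu_uv : 0 < ⟪u, u - v⟫) (hv_vu : 0 < ⟪v, v - u⟫) :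
    0 < x ∧ 0 < y ∧ x + y < 1 := by
  rw [← real_inner_self_eq_norm_sq] at hu hv
  simp only [inner_add_left, real_inner_smul_left, inner_sub_right] at hu hv hu_uv hv_vu
  rw [real_inner_comm u v] at hu hv_vu
  exact pos_of_gram_system (real_inner_mul_inner_self_le u v) hu hv huv
    (sub_pos.mp hu_uv) (sub_pos.mp hv_vu)

lemma mem_interior_convexHull_of_dist_eq_of_inner_pos (hV : finrank ℝ V = 2) {A B C O : V}
    (hABC : AffineIndependent ℝ ![A, B, C])
    (hA : 0 < ⟪B - A, C - A⟫) (hB : 0 < ⟪A - B, C - B⟫) (hC : 0 < ⟪A - C, B - C⟫)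
    (hOB : dist O A = dist O B) (hOC : dist O A = dist O C) :
    O ∈ interior (convexHull ℝ {A, B, C}) := by
  have : FiniteDimensional ℝ V := Module.finite_of_finrank_eq_succ hV
  let b : AffineBasis (Fin 3) ℝ V :=
    ⟨![A, B, C], hABC, hABC.affineSpan_eq_top_iff_card_eq_finrank_add_one.mpr (by simp [hV])⟩
  have hb_apply : ⇑b = ![A, B, C] := rfl
  have hb : range b = {A, B, C} := by
    simp only [hb_apply, Matrix.range_cons, Matrix.range_empty, union_empty, singleton_union]
  rw [← hb, b.interior_convexHull]
  set w := fun i => b.coord i O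
  have hw : w 0 + w 1 + w 2 = 1 := by rw [← Fin.sum_univ_three]; exact b.sum_coord_apply_eq_one O
  have hO : O - A = w 1 • (B - A) + w 2 • (C - A) := by
    conv_lhs => rw [← b.affineCombination_coord_eq_self O,
      Finset.univ.affineCombination_eq_weightedVSubOfPoint_vadd_of_sum_eq_one _ _
        (b.sum_coord_apply_eq_one O) A]
    simp [Finset.weightedVSubOfPoint_apply, Fin.sum_univ_three, hb_apply, w]
  have hB' : 0 < ⟪B - A, (B - A) - (C - A)⟫ := by
    rwa [← neg_sub B A, show C - B = -((B - A) - (C - A)) by abel, inner_neg_neg] at hB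
  have hC' : 0 < ⟪C - A, (C - A) - (B - A)⟫ := by
    rwa [← neg_sub C A, show B - C = -((C - A) - (B - A)) by abel, inner_neg_neg] at hC
  have equidistant {P : V} (h : dist O A = dist O P) : ⟪O - A, P - A⟫ = ‖P - A‖ ^ 2 / 2 :=
    inner_eq_half_norm_sq_of_norm_sub_eq <| by
      rw [sub_sub_sub_cancel_right, ← dist_eq_norm, ← dist_eq_norm, h]
  obtain ⟨h1, h2, h12⟩ := pos_of_inner_smul_add_smul_eq_half (hO ▸ equidistant hOB)
    (hO ▸ equidistant hOC) hA hB' hC'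
  intro i
  fin_cases i
  · change 0 < w 0
    linarith
  · exact h1
  · exact h2

end InnerProductSpace

/-- If `A, B, C` are non-collinear with longest side `BC` of length `a`, `M` is the midpoint of
`BC`, and `a/2 < dist A M`, then the circumcenter (any point equidistant from `A`, `B`, `C`)
lies in the interior of the triangle, i.e. the interior of the convex hull of `{A, B, C}`. -/
theorem circumcenter_mem_interior (A B C O : EuclideanSpace ℝ (Fin 2))
    (hcol : ¬ Collinear ℝ ({A, B, C} : Set (EuclideanSpace ℝ (Fin 2))))
    (h1 : dist A C ≤ dist B C) (h2 : dist A B ≤ dist A C)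
    (hm : dist B C / 2 < dist A (midpoint ℝ B C))
    (hOB : dist O A = dist O B) (hOC : dist O A = dist O C) :
    O ∈ interior (convexHull ℝ ({A, B, C} : Set (EuclideanSpace ℝ (Fin 2)))) := by
  have hA : 0 < ⟪B - A, C - A⟫ := by
    rw [inner_sub_eq_dist_midpoint_sq_sub, sub_pos]
    exact pow_lt_pow_left₀ hm (by positivity) two_ne_zero
  have hB : 0 < ⟪A - B, C - B⟫ := by
    linarith [inner_sub_inner_eq_dist_sq_sub_dist_sq A B C, pow_le_pow_left₀ dist_nonneg h1 2]
  have hC : 0 < ⟪A - C, B - C⟫ := by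
    have := inner_sub_inner_eq_dist_sq_sub_dist_sq A C B
    rw [real_inner_comm (B - A), dist_comm C B] at this
    linarith [pow_le_pow_left₀ dist_nonneg (h2.trans h1) 2]
  exact mem_interior_convexHull_of_dist_eq_of_inner_pos finrank_euclideanSpace_fin
    (affineIndependent_iff_not_collinear_set.mpr hcol) hA hB hC hOB hOC
end

section
/- Let A, B, C be non-collinear points in the Euclidean plane and suppose a/2 < d(A,M), where a = d(B,C) is the longest side length and M is the midpoint of BC. If D is a point with max(d(D,A), d(D,B), d(D,C)) ≤ r and D is not the circumcenter of triangle ABC, then there exists r' < r and a point D' with max(d(D',A), d(D',B), d(D',C)) ≤ r'. -/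
/-!
Since `BC` is a longest side and `A` lies outside the circle with diameter `BC`, no angle of the
triangle is obtuse, so its circumcenter `O` has nonnegative barycentric coordinates, i.e. lies in
the convex hull of `A`, `B`, `C`. For `D ≠ O`, the linear functional `⟪D - O, ·⟫` is at most its
value at `O` at some vertex `P`, and then `|DP|² ≥ |DO|² + R² > R²` with `R` the circumradius.
Hence `R < r`, and `O` is a better center.
-/

open scoped RealInnerProductSpace

theorem add_smul_sub_add_smul_sub_mem_convexHull {E : Type*} [AddCommGroup E] [Module ℝ E]
    {A B C : E} {b c : ℝ} (hb : 0 ≤ b) (hc : 0 ≤ c) (hbc : b + c ≤ 1) :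
    A + b • (B - A) + c • (C - A) ∈ convexHull ℝ {A, B, C} := by
  have hw : ∀ i, 0 ≤ ![1 - b - c, b, c] i := by
    intro i
    fin_cases i
    exacts [show 0 ≤ 1 - b - c by linarith, hb, hc]
  have h := (convex_convexHull ℝ ({A, B, C} : Set E)).sum_mem (t := Finset.univ)
    (w := ![1 - b - c, b, c]) (z := ![A, B, C]) (fun i _ => hw i)
    (by simp only [Fin.sum_univ_three, Matrix.cons_val]; ring)
    (fun i _ => by fin_cases i <;> exact subset_convexHull ℝ _ (by simp))
  convert h using 1
  simp only [Fin.sum_univ_three, Matrix.cons_val]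
  module

section

variable {V : Type*} [NormedAddCommGroup V] [InnerProductSpace ℝ V]

theorem inner_sub_sub_pos_of_dist_div_two_lt_dist_midpoint {A B C : V}
    (h : dist B C / 2 < dist A (midpoint ℝ B C)) : 0 < ⟪B - A, C - A⟫ := by
  have hBC : B - C = (B - A) - (C - A) := by abel
  have hAM : A - midpoint ℝ B C = -((2 : ℝ)⁻¹ • ((B - A) + (C - A))) := by
    rw [midpoint_eq_smul_add, invOf_eq_inv]; module
  rw [dist_eq_norm, dist_eq_norm, hBC, hAM, norm_neg, norm_smul, norm_inv, Real.norm_ofNat] at h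
  have hlt : ‖(B - A) - (C - A)‖ ^ 2 < ‖(B - A) + (C - A)‖ ^ 2 :=
    pow_lt_pow_left₀ (by linarith) (norm_nonneg _) two_ne_zero
  rw [norm_sub_sq_real, norm_add_sq_real] at hlt
  linarith

theorem inner_sub_sub_nonneg_of_dist_le {A B C : V} (h : dist A C ≤ dist B C) :
    0 ≤ ⟪A - B, C - B⟫ := by
  have hle : ‖(A - B) - (C - B)‖ ^ 2 ≤ ‖C - B‖ ^ 2 := by
    rw [sub_sub_sub_cancel_right, ← dist_eq_norm, ← dist_eq_norm']
    exact pow_le_pow_left₀ dist_nonneg h 2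
  rw [norm_sub_sq_real] at hle
  nlinarith [sq_nonneg ‖A - B‖]

theorem inner_mul_inner_lt_of_not_collinear {A B C : V}
    (h : ¬ Collinear ℝ ({A, B, C} : Set V)) :
    ⟪B - A, C - A⟫ * ⟪B - A, C - A⟫ < ⟪B - A, B - A⟫ * ⟪C - A, C - A⟫ := by
  have hsin : 0 < Real.sin (EuclideanGeometry.angle B A C) :=
    EuclideanGeometry.sin_pos_of_not_collinear (by rwa [Set.insert_comm])
  have hB : 0 < ‖B - A‖ := norm_pos_iff.2 (sub_ne_zero.2 (ne₁₂_of_not_collinear h).symm)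
  have hC : 0 < ‖C - A‖ := norm_pos_iff.2 (sub_ne_zero.2 (ne₁₃_of_not_collinear h).symm)
  have hsqrt := InnerProductGeometry.sin_angle_mul_norm_mul_norm (B - A) (C - A)
  have hpos : 0 < √(⟪B - A, B - A⟫ * ⟪C - A, C - A⟫ - ⟪B - A, C - A⟫ * ⟪B - A, C - A⟫) :=
    hsqrt ▸ mul_pos hsin (mul_pos hB hC)
  exact sub_pos.1 (Real.sqrt_pos.1 hpos)

theorem exists_lt_dist_of_mem_convexHull {S : Set V} {Q D : V} {R : ℝ}
    (hQ : Q ∈ convexHull ℝ S) (hS : ∀ P ∈ S, dist P Q = R) (hD : D ≠ Q) :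
    ∃ P ∈ S, R < dist D P := by
  obtain ⟨P, hP, hle⟩ := ((innerₛₗ ℝ (D - Q)).concaveOn convex_univ).exists_le_of_mem_convexHull
    (Set.subset_univ S) hQ
  refine ⟨P, hP, ?_⟩
  simp only [innerₛₗ_apply_apply] at hle
  have hsq : dist D P ^ 2 = ‖D - Q‖ ^ 2 + 2 * ⟪D - Q, Q - P⟫ + R ^ 2 := by
    rw [dist_eq_norm, ← hS P hP, dist_eq_norm', ← norm_add_sq_real]
    congr 2; abel
  have hDQ : 0 < ‖D - Q‖ := norm_pos_iff.2 (sub_ne_zero.2 hD)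
  have hR : 0 ≤ R := hS P hP ▸ dist_nonneg
  rw [inner_sub_right] at hsq
  exact lt_of_pow_lt_pow_left₀ 2 dist_nonneg (by nlinarith)

theorem exists_equidistant_mem_convexHull_of_inner_nonneg {A B C : V}
    (hcol : ¬ Collinear ℝ ({A, B, C} : Set V))
    (hA : 0 ≤ ⟪B - A, C - A⟫) (hB : 0 ≤ ⟪A - B, C - B⟫) (hC : 0 ≤ ⟪A - C, B - C⟫) :
    ∃ Q ∈ convexHull ℝ {A, B, C}, dist A Q = dist B Q ∧ dist A Q = dist C Q := by
  have hg := inner_mul_inner_lt_of_not_collinear hcol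
  rw [show A - B = -(B - A) by abel, show C - B = (C - A) - (B - A) by abel, inner_neg_left,
    inner_sub_right, neg_sub] at hB
  rw [show A - C = -(C - A) by abel, show B - C = (B - A) - (C - A) by abel, inner_neg_left,
    inner_sub_right, neg_sub, real_inner_comm (B - A)] at hC
  set u := B - A
  set v := C - A
  set α := ⟪u, u⟫
  set β := ⟪v, v⟫
  set γ := ⟪u, v⟫
  have hg2 : 0 < 2 * (α * β - γ * γ) := by linarith
  -- Barycentric coordinates of the circumcenter; the one at `A` is `γ (α + β - 2γ)` over the
  -- same denominator.
  set b := β * (α - γ) / (2 * (α * β - γ * γ))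
  set c := α * (β - γ) / (2 * (α * β - γ * γ))
  have hbc : b + c ≤ 1 := by
    rw [← add_div, div_le_one hg2]
    nlinarith [mul_nonneg hA (add_nonneg hB hC)]
  have hb : 0 ≤ b := div_nonneg (mul_nonneg (real_inner_self_nonneg) hB) hg2.le
  have hc : 0 ≤ c := div_nonneg (mul_nonneg (real_inner_self_nonneg) hC) hg2.le
  refine ⟨A + b • u + c • v, add_smul_sub_add_smul_sub_mem_convexHull hb hc hbc, ?_, ?_⟩
  all_goals
    rw [← AffineSubspace.mem_perpBisector_iff_dist_eq',
      AffineSubspace.mem_perpBisector_iff_inner_eq, dist_eq_norm', ← real_inner_self_eq_norm_sq, vsub_eq_sub, vsub_eq_sub, add_assoc,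
      add_sub_cancel_left, inner_add_left, real_inner_smul_left, real_inner_smul_left]
  · change b * α + c * ⟪v, u⟫ = α / 2
    rw [real_inner_comm u v, div_mul_eq_mul_div, div_mul_eq_mul_div, ← add_div,
      div_eq_div_iff hg2.ne' two_ne_zero]
    ring
  · change b * γ + c * β = β / 2
    rw [div_mul_eq_mul_div, div_mul_eq_mul_div, ← add_div, div_eq_div_iff hg2.ne' two_ne_zero]
    ring

end

/-- Suppose `A, B, C` are non-collinear with longest side `BC` of length `a`, `M` is the
midpoint of `BC`, and `a/2 < dist A M`.  If `D` is within distance `r` of all of `A`, `B`, `C`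
but `D` is not the circumcenter of the triangle `ABC`, then some point `D'` is within distance
`r' < r` of all of `A`, `B`, `C`. -/
theorem shrink_radius_of_not_circumcenter (A B C D : EuclideanSpace ℝ (Fin 2)) (r : ℝ)
    (hcol : ¬ Collinear ℝ ({A, B, C} : Set (EuclideanSpace ℝ (Fin 2))))
    (h1 : dist A C ≤ dist B C) (h2 : dist A B ≤ dist A C)
    (hm : dist B C / 2 < dist A (midpoint ℝ B C))
    (hD : dist D A ≤ r ∧ dist D B ≤ r ∧ dist D C ≤ r)
    (hnot : ¬ (dist D A = dist D B ∧ dist D A = dist D C)) :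
    ∃ r' : ℝ, r' < r ∧ ∃ D' : EuclideanSpace ℝ (Fin 2),
      dist D' A ≤ r' ∧ dist D' B ≤ r' ∧ dist D' C ≤ r' := by
  have hA := inner_sub_sub_pos_of_dist_div_two_lt_dist_midpoint hm
  have hB := inner_sub_sub_nonneg_of_dist_le h1
  have hC := inner_sub_sub_nonneg_of_dist_le ((h2.trans h1).trans_eq (dist_comm B C))
  obtain ⟨Q, hQ, hQB, hQC⟩ := exists_equidistant_mem_convexHull_of_inner_nonneg hcol hA.le hB hC
  have hDQ : D ≠ Q := by
    rintro rfl
    simp only [dist_comm D] at hnot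
    exact hnot ⟨hQB, hQC⟩
  have hQr : ∀ P ∈ ({A, B, C} : Set _), dist P Q = dist A Q := by
    simp only [Set.forall_mem_insert, Set.mem_singleton_iff, forall_eq]
    exact ⟨trivial, hQB.symm, hQC.symm⟩
  have hDr : ∀ P ∈ ({A, B, C} : Set _), dist D P ≤ r := by
    simpa only [Set.forall_mem_insert, Set.mem_singleton_iff, forall_eq] using hD
  obtain ⟨P, hP, hlt⟩ := exists_lt_dist_of_mem_convexHull hQ hQr hDQ
  exact ⟨dist A Q, hlt.trans_le (hDr P hP), Q, (dist_comm Q A).le,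
    (dist_comm Q B ▸ hQB).ge, (dist_comm Q C ▸ hQC).ge⟩
end

section
/- Fix a > 0. The function f(K) = (2/(a√K)) · arcsin((2/√3) · sin(a√K/2)), defined for K > 0 with a√K < 2π/3, is strictly increasing in K, and f(K) → 2/√3 as K → 0⁺. -/
open Real Filter Set Topology

/-!
Put `F(t) = arcsin (c sin t)` with `c = 2/√3` and `t = a√K/2`, so that the function in question
is `F(t)/t`, and `t` increases from `0` to `π/3` as `K` runs over the interval. Since
`F'(t) = c cos t / √(1 - c² sin² t)` and `F'(t)² = c² (1 - sin² t) / (1 - c² sin² t)` increases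
with `sin² t` for `c > 1`, `F` is strictly convex on `[0, π/3)`; as `F(0) = 0`, the secant slope
`F(t)/t` is strictly increasing, and it tends to `F'(0) = c` as `t → 0⁺`.
-/

lemma StrictConvexOn.strictMonoOn_div {𝕜 : Type*} [Field 𝕜] [LinearOrder 𝕜]
    [IsStrictOrderedRing 𝕜] {s : Set 𝕜} {f : 𝕜 → 𝕜} (hf : StrictConvexOn 𝕜 s f) (h₀ : 0 ∈ s)
    (hf₀ : f 0 = 0) : StrictMonoOn (fun t => f t / t) (s ∩ Ioi 0) := by
  intro x hx y hy hxy
  simpa [hf₀] using hf.secant_strict_mono h₀ hx.1 hy.1 hx.2.ne' hy.2.ne' hxy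

lemma HasDerivAt.tendsto_div_nhdsGT_zero {𝕜 : Type*} [NontriviallyNormedField 𝕜] [Preorder 𝕜]
    {f : 𝕜 → 𝕜} {f' : 𝕜} (hf : HasDerivAt f f' 0) (hf₀ : f 0 = 0) :
    Tendsto (fun t => f t / t) (𝓝[>] 0) (𝓝 f') := by
  simpa [hf₀, div_eq_inv_mul] using hf.tendsto_slope_zero_right

lemma one_sub_div_one_sub_mul_lt_one_sub_div_one_sub_mul {k x y : ℝ} (hk : 1 < k) (hxy : x < y)
    (hy : k * y < 1) : (1 - x) / (1 - k * x) < (1 - y) / (1 - k * y) := by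
  have hx : 0 < 1 - k * x := by nlinarith
  rw [div_lt_div_iff₀ hx (by linarith)]
  nlinarith

lemma mul_sin_mem_Ico {c t : ℝ} (hc : 0 < c) (ht : t ∈ Ico 0 (arcsin c⁻¹)) :
    c * sin t ∈ Ico 0 1 := by
  have hT : arcsin c⁻¹ ≤ π / 2 := arcsin_le_pi_div_two _
  have hsin : sin t < c⁻¹ :=
    (lt_arcsin_iff_sin_lt' ⟨by linarith [ht.1, pi_pos], ht.2.trans_le hT⟩).1 ht.2
  refine ⟨mul_nonneg hc.le (sin_nonneg_of_nonneg_of_le_pi ht.1 (by linarith [ht.2, pi_pos])), ?_⟩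
  calc c * sin t < c * c⁻¹ := mul_lt_mul_of_pos_left hsin hc
    _ = 1 := mul_inv_cancel₀ hc.ne'

lemma hasDerivAt_arcsin_mul_sin {c t : ℝ} (h₁ : c * sin t ≠ -1) (h₂ : c * sin t ≠ 1) :
    HasDerivAt (fun t => arcsin (c * sin t)) (c * cos t / √(1 - (c * sin t) ^ 2)) t := by
  have h := (hasDerivAt_arcsin h₁ h₂).comp t ((hasDerivAt_sin t).const_mul c)
  exact h.congr_deriv (one_div_mul_eq_div _ _)

lemma strictMonoOn_deriv_arcsin_mul_sin {c : ℝ} (hc : 1 < c) :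
    StrictMonoOn (fun t => c * cos t / √(1 - (c * sin t) ^ 2)) (Ioo 0 (arcsin c⁻¹)) := by
  have hT : arcsin c⁻¹ ≤ π / 2 := arcsin_le_pi_div_two _
  have hpos : ∀ t ∈ Ioo 0 (arcsin c⁻¹), 0 < c * cos t / √(1 - (c * sin t) ^ 2) := by
    intro t ht
    obtain ⟨h₀, h₁⟩ := mul_sin_mem_Ico (by linarith) (Ioo_subset_Ico_self ht)
    have : 0 < cos t := cos_pos_of_mem_Ioo ⟨by linarith [ht.1, pi_pos], by linarith [ht.2]⟩
    have : 0 < 1 - (c * sin t) ^ 2 := by nlinarith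
    positivity
  have hsq : ∀ t ∈ Ioo 0 (arcsin c⁻¹), (c * cos t / √(1 - (c * sin t) ^ 2)) ^ 2 =
      c ^ 2 * ((1 - sin t ^ 2) / (1 - c ^ 2 * sin t ^ 2)) := by
    intro t ht
    obtain ⟨h₀, h₁⟩ := mul_sin_mem_Ico (by linarith) (Ioo_subset_Ico_self ht)
    rw [div_pow, sq_sqrt (by nlinarith), mul_pow, cos_sq']
    ring
  intro s hs t ht hst
  refine lt_of_pow_lt_pow_left₀ 2 (hpos t ht).le ?_
  rw [hsq s hs, hsq t ht]
  have hsin : sin s < sin t := strictMonoOn_sin ⟨by linarith [hs.1, pi_pos], hs.2.le.trans hT⟩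
    ⟨by linarith [ht.1, pi_pos], ht.2.le.trans hT⟩ hst
  have hsin₀ : 0 < sin s := sin_pos_of_pos_of_lt_pi hs.1 (by linarith [hs.2, pi_pos])
  obtain ⟨ht₀, ht₁⟩ := mul_sin_mem_Ico (by linarith) (Ioo_subset_Ico_self ht)
  exact mul_lt_mul_of_pos_left (one_sub_div_one_sub_mul_lt_one_sub_div_one_sub_mul
    (one_lt_pow₀ hc two_ne_zero) (by nlinarith) (by nlinarith)) (by positivity)

theorem strictConvexOn_arcsin_mul_sin {c : ℝ} (hc : 1 < c) :
    StrictConvexOn ℝ (Ico 0 (arcsin c⁻¹)) (fun t => arcsin (c * sin t)) := by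
  refine StrictMonoOn.strictConvexOn_of_deriv (convex_Ico _ _) (by fun_prop) ?_
  rw [interior_Ico]
  refine (strictMonoOn_deriv_arcsin_mul_sin hc).congr fun t ht => ?_
  obtain ⟨h₀, h₁⟩ := mul_sin_mem_Ico (by linarith) (Ioo_subset_Ico_self ht)
  exact ((hasDerivAt_arcsin_mul_sin (by linarith) h₁.ne).deriv).symm

theorem strictMonoOn_arcsin_mul_sin_div {c : ℝ} (hc : 1 < c) :
    StrictMonoOn (fun t => arcsin (c * sin t) / t) (Ioo 0 (arcsin c⁻¹)) := by
  have h₀ : (0 : ℝ) ∈ Ico 0 (arcsin c⁻¹) := ⟨le_rfl, arcsin_pos.2 (inv_pos.2 (by linarith))⟩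
  refine ((strictConvexOn_arcsin_mul_sin hc).strictMonoOn_div h₀ (by simp)).mono fun t ht => ?_
  exact ⟨Ioo_subset_Ico_self ht, ht.1⟩

theorem tendsto_arcsin_mul_sin_div (c : ℝ) :
    Tendsto (fun t => arcsin (c * sin t) / t) (𝓝[>] 0) (𝓝 c) := by
  have h : HasDerivAt (fun t => arcsin (c * sin t)) c 0 := by
    simpa using hasDerivAt_arcsin_mul_sin (c := c) (t := 0) (by simp) (by simp)
  exact h.tendsto_div_nhdsGT_zero (by simp)

lemma strictMonoOn_mul_sqrt_div_two {a : ℝ} (ha : 0 < a) :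
    StrictMonoOn (fun K => a * √K / 2) (Ici 0) := fun x hx _ _ hxy => by
  have := sqrt_lt_sqrt hx hxy
  dsimp only; gcongr

lemma mapsTo_mul_sqrt_div_two {a T : ℝ} (ha : 0 < a) (hT : 0 < T) :
    MapsTo (fun K => a * √K / 2) (Ioo 0 ((2 * T / a) ^ 2)) (Ioo 0 T) := fun K hK => by
  have hK₀ : 0 < √K := sqrt_pos.2 hK.1
  have hK₁ := (sqrt_lt' (by positivity)).2 hK.2
  rw [lt_div_iff₀ ha] at hK₁
  exact ⟨by positivity, show a * √K / 2 < T by linarith⟩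

lemma tendsto_mul_sqrt_div_two_nhdsGT_zero {a : ℝ} (ha : 0 < a) :
    Tendsto (fun K => a * √K / 2) (𝓝[>] 0) (𝓝[>] 0) := by
  refine tendsto_nhdsWithin_iff.2 ⟨?_, ?_⟩
  · exact ((continuous_const.mul continuous_sqrt).div_const 2).tendsto' 0 0 (by simp)
      |>.mono_left nhdsWithin_le_nhds
  · filter_upwards [self_mem_nhdsWithin] with K (hK : 0 < K)
    have := sqrt_pos.2 hK
    exact show 0 < a * √K / 2 by positivity

lemma one_lt_two_div_sqrt_three : 1 < 2 / √3 := by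
  rw [one_lt_div (by positivity), sqrt_lt' two_pos]
  norm_num

lemma arcsin_inv_two_div_sqrt_three : arcsin (2 / √3)⁻¹ = π / 3 := by
  rw [inv_div, ← sin_pi_div_three]
  exact arcsin_sin (by linarith [pi_pos]) (by linarith [pi_pos])

/-- For fixed `a > 0`, the function
`f(K) = (2/(a√K)) · arcsin((2/√3) · sin(a√K/2))`, defined for `0 < K < (2π/(3a))²`
(i.e. `a√K < 2π/3`), is strictly increasing, and `f(K) → 2/√3` as `K → 0⁺`. -/
theorem spherical_persistence_strictMono_tendsto (a : ℝ) (ha : 0 < a) :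
    StrictMonoOn
      (fun K : ℝ =>
        (2 / (a * Real.sqrt K)) * Real.arcsin ((2 / Real.sqrt 3) * Real.sin (a * Real.sqrt K / 2)))
      (Set.Ioo 0 ((2 * π / (3 * a)) ^ 2)) ∧
    Tendsto
      (fun K : ℝ =>
        (2 / (a * Real.sqrt K)) * Real.arcsin ((2 / Real.sqrt 3) * Real.sin (a * Real.sqrt K / 2)))
      (nhdsWithin 0 (Set.Ioi 0)) (nhds (2 / Real.sqrt 3)) := by
  have hcomp : (fun K : ℝ => 2 / (a * √K) * arcsin (2 / √3 * sin (a * √K / 2))) =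
      (fun t => arcsin (2 / √3 * sin t) / t) ∘ fun K => a * √K / 2 := by
    funext K
    simp only [Function.comp_apply]
    ring
  rw [hcomp]
  refine ⟨?_, (tendsto_arcsin_mul_sin_div _).comp (tendsto_mul_sqrt_div_two_nhdsGT_zero ha)⟩
  have hmono := strictMonoOn_arcsin_mul_sin_div one_lt_two_div_sqrt_three
  rw [arcsin_inv_two_div_sqrt_three] at hmono
  rw [show 2 * π / (3 * a) = 2 * (π / 3) / a by ring]
  exact hmono.comp ((strictMonoOn_mul_sqrt_div_two ha).mono fun K hK => hK.1.le)
    (mapsTo_mul_sqrt_div_two ha (by positivity))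
end

section
/- Fix a > 0. The function g(K) = (2/(a√(−K))) · arcsinh((2/√3) · sinh(a√(−K)/2)), defined for K < 0, is strictly increasing in K, satisfies g(K) < 2/√3 for all K < 0, and g(K) → 2/√3 as K → 0⁻. -/
open Real Filter Set Topology

/-!
With `c = 2/√3` and `u = a√(-K)/2`, the function is `h(u)/u` for `h(t) = arsinh (c sinh t)`, and
`u` decreases from `∞` to `0` as `K` increases to `0`. Since `c > 1`, the derivative of `h`, whose
square is `c²(1 + sinh² t)/(1 + c² sinh² t)`, decreases on `[0, ∞)`, so `h` is strictly concave
there with `h(0) = 0` and `h'(0) = c`. Hence the secant slope `h(u)/u` strictly decreases in `u`,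
stays below `h'(0) = c`, and tends to `c` as `u → 0⁺`.
-/

section SecantThroughOrigin

variable {f : ℝ → ℝ}

theorem StrictConcaveOn.strictAntiOn_div_self (hf : StrictConcaveOn ℝ (Ici 0) f) (h0 : f 0 = 0) :
    StrictAntiOn (fun t => f t / t) (Ioi 0) := fun x hx y hy hxy => by
  simpa [h0] using hf.secant_strict_mono self_mem_Ici (Ioi_subset_Ici_self hx)
    (Ioi_subset_Ici_self hy) hx.ne' hy.ne' hxy

theorem StrictConcaveOn.div_self_lt_of_hasDerivAt (hf : StrictConcaveOn ℝ (Ici 0) f)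
    (h0 : f 0 = 0) {f' : ℝ} (hf' : HasDerivAt f f' 0) {t : ℝ} (ht : 0 < t) : f t / t < f' := by
  simpa [slope_def_field, h0, neg_div] using
    hf.neg.lt_slope_of_hasDerivAt self_mem_Ici ht.le ht hf'.neg

theorem tendsto_div_self_of_hasDerivAt (h0 : f 0 = 0) {f' : ℝ} (hf' : HasDerivAt f f' 0) :
    Tendsto (fun t => f t / t) (𝓝[≠] 0) (𝓝 f') := by
  simpa [h0, div_eq_inv_mul] using hf'.tendsto_slope_zero

end SecantThroughOrigin

section ArsinhMulSinh

theorem hasDerivAt_arsinh_mul_sinh (c t : ℝ) :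
    HasDerivAt (fun t => arsinh (c * sinh t)) (c * cosh t / √(1 + (c * sinh t) ^ 2)) t :=
  ((hasDerivAt_arsinh _).comp t ((hasDerivAt_sinh t).const_mul c)).congr_deriv
    (inv_mul_eq_div _ _)

variable {c : ℝ}

theorem strictAntiOn_deriv_arsinh_mul_sinh (hc : 1 < c) :
    StrictAntiOn (fun t => c * cosh t / √(1 + (c * sinh t) ^ 2)) (Ici 0) := by
  intro s hs t _ hst
  have hsq : sinh s ^ 2 < sinh t ^ 2 :=
    pow_lt_pow_left₀ (sinh_lt_sinh.2 hst) (sinh_nonneg_iff.2 hs) two_ne_zero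
  refine lt_of_pow_lt_pow_left₀ 2 (by positivity) ?_
  simp only [div_pow, mul_pow, cosh_sq']
  rw [sq_sqrt (by positivity), sq_sqrt (by positivity),
    div_lt_div_iff₀ (by positivity) (by positivity)]
  have hc2 : 0 < c ^ 2 - 1 := sub_pos.2 (one_lt_pow₀ hc two_ne_zero)
  linear_combination mul_pos (mul_pos (pow_pos (by linarith) 2 : 0 < c ^ 2) hc2) (sub_pos.2 hsq)

theorem strictConcaveOn_arsinh_mul_sinh (hc : 1 < c) :
    StrictConcaveOn ℝ (Ici 0) (fun t => arsinh (c * sinh t)) := by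
  refine StrictAntiOn.strictConcaveOn_of_deriv (convex_Ici 0)
    (continuous_arsinh.comp (continuous_const.mul continuous_sinh)).continuousOn ?_
  rw [interior_Ici]
  refine (strictAntiOn_deriv_arsinh_mul_sinh hc).mono Ioi_subset_Ici_self |>.congr fun t _ => ?_
  exact ((hasDerivAt_arsinh_mul_sinh c t).deriv).symm

end ArsinhMulSinh

/-- For fixed `a > 0`, the function
`g(K) = (2/(a√(−K))) · arcsinh((2/√3) · sinh(a√(−K)/2))`, defined for `K < 0`,
is strictly increasing, satisfies `g(K) < 2/√3` for all `K < 0`, and `g(K) → 2/√3` as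
`K → 0⁻`. -/
theorem hyperbolic_persistence_strictMono_lt_tendsto (a : ℝ) (ha : 0 < a) :
    StrictMonoOn
      (fun K : ℝ =>
        (2 / (a * Real.sqrt (-K))) * Real.arsinh ((2 / Real.sqrt 3) * Real.sinh (a * Real.sqrt (-K) / 2)))
      (Set.Iio 0) ∧
    (∀ K : ℝ, K < 0 →
      (2 / (a * Real.sqrt (-K))) * Real.arsinh ((2 / Real.sqrt 3) * Real.sinh (a * Real.sqrt (-K) / 2))
        < 2 / Real.sqrt 3) ∧
    Tendsto
      (fun K : ℝ =>
        (2 / (a * Real.sqrt (-K))) * Real.arsinh ((2 / Real.sqrt 3) * Real.sinh (a * Real.sqrt (-K) / 2)))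
      (nhdsWithin 0 (Set.Iio 0)) (nhds (2 / Real.sqrt 3)) := by
  set c : ℝ := 2 / √3
  have hc : 1 < c := by
    rw [one_lt_div (by positivity), sqrt_lt' two_pos]; norm_num
  set u : ℝ → ℝ := fun K => a * √(-K) / 2
  have hg (K : ℝ) : 2 / (a * √(-K)) * arsinh (c * sinh (a * √(-K) / 2)) =
      arsinh (c * sinh (u K)) / u K := by
    rw [← inv_div, inv_mul_eq_div]
  have hu_pos : MapsTo u (Iio 0) (Ioi 0) := fun K hK => by
    have : 0 < √(-K) := sqrt_pos.2 (neg_pos.2 hK)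
    simp only [u, mem_Ioi]; positivity
  have hu_anti : StrictAntiOn u (Iio 0) := fun K _ L hL hKL => by
    have := sqrt_lt_sqrt (neg_nonneg.2 (le_of_lt hL)) (neg_lt_neg hKL)
    simp only [u]; gcongr
  have hu_tendsto : Tendsto u (𝓝[<] 0) (𝓝[>] 0) := by
    refine tendsto_nhdsWithin_iff.2 ⟨?_, eventually_nhdsWithin_of_forall hu_pos⟩
    have : Continuous u := by fun_prop
    simpa [u] using this.continuousWithinAt (s := Iio 0) (x := 0) |>.tendsto
  have hconc := strictConcaveOn_arsinh_mul_sinh hc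
  have h0 : arsinh (c * sinh 0) = 0 := by simp
  have hderiv0 : HasDerivAt (fun t => arsinh (c * sinh t)) c 0 := by
    simpa using hasDerivAt_arsinh_mul_sinh c 0
  simp only [hg]
  refine ⟨fun K hK L hL hKL => ?_, fun K hK => ?_, ?_⟩
  · exact hconc.strictAntiOn_div_self h0 (hu_pos hL) (hu_pos hK) (hu_anti hK hL hKL)
  · exact hconc.div_self_lt_of_hasDerivAt h0 hderiv0 (hu_pos hK)
  · exact ((tendsto_div_self_of_hasDerivAt h0 hderiv0).mono_left (nhdsGT_le_nhdsNE 0)).comp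
      hu_tendsto
end

section
/- Define p(K) for K ∈ ℝ by: p(K) = (2/(a√(−K)))·arcsinh((2/√3)·sinh(a√(−K)/2)) for K < 0, p(0) = 2/√3, and p(K) = (2/(a√K))·arcsin((2/√3)·sin(a√K/2)) for K > 0 (with a√K < 2π/3), for a fixed a > 0. Then p is continuous and strictly increasing on its domain, hence injective. -/
open Real

/-- The persistence ratio of an equilateral triangle of side `a` on the surface of constant
curvature `K`, as a function of `K`. -/
noncomputable def persistenceRatio (a K : ℝ) : ℝ :=
  if K < 0 then
    (2 / (a * Real.sqrt (-K))) * Real.arsinh ((2 / Real.sqrt 3) * Real.sinh (a * Real.sqrt (-K) / 2))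
  else if K = 0 then 2 / Real.sqrt 3
  else (2 / (a * Real.sqrt K)) * Real.arcsin ((2 / Real.sqrt 3) * Real.sin (a * Real.sqrt K / 2))

/-!
Write `z = a√K / 2` for `K > 0` and `w = a√(-K) / 2` for `K < 0`. Then `p(K) = φ(z) / z` and
`p(K) = ψ(w) / w` with `φ z = arcsin ((2/√3) sin z)` and `ψ w = arsinh ((2/√3) sinh w)`, the
circumradius of the equilateral triangle of side `2z` on the unit sphere, resp. of side `2w` in the
hyperbolic plane. Both functions vanish at `0` with derivative `2/√3` there, so `p` is the
difference quotient `dslope` at `0` of `φ` resp. `ψ`, a continuous function. Since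
`φ' = g ∘ cos` and `ψ' = g ∘ cosh` with `g t = √(1 + 1/(4t² - 1))` decreasing, `φ` is strictly
convex on `[0, π/3)` and `ψ` strictly concave on `[0, ∞)`; hence the difference quotient of `φ` at
`0` increases in `z` and that of `ψ` decreases in `w`, i.e. both increase in `K`.
-/

open Set

section dslope

variable {S : Set ℝ} {f : ℝ → ℝ} {a : ℝ}

theorem StrictConvexOn.strictMonoOn_dslope (hf : StrictConvexOn ℝ S f) (ha : a ∈ S)
    (hfa : DifferentiableAt ℝ f a) : StrictMonoOn (dslope f a) S := by
  intro x hx y hy hxy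
  rcases eq_or_ne x a with rfl | hxa
  · rw [dslope_same, dslope_of_ne _ hxy.ne']
    exact hf.deriv_lt_slope hx hy hxy hfa
  rcases eq_or_ne y a with rfl | hya
  · rw [dslope_same, dslope_of_ne _ hxa, slope_comm]
    exact hf.slope_lt_deriv hx hy hxy hfa
  rw [dslope_of_ne _ hxa, dslope_of_ne _ hya, slope_def_field, slope_def_field]
  exact hf.secant_strict_mono ha hx hy hxa hya hxy

theorem StrictConcaveOn.strictAntiOn_dslope (hf : StrictConcaveOn ℝ S f) (ha : a ∈ S)
    (hfa : DifferentiableAt ℝ f a) : StrictAntiOn (dslope f a) S := by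
  intro x hx y hy hxy
  rcases eq_or_ne x a with rfl | hxa
  · rw [dslope_same, dslope_of_ne _ hxy.ne']
    exact hf.slope_lt_deriv hx hy hxy hfa
  rcases eq_or_ne y a with rfl | hya
  · rw [dslope_same, dslope_of_ne _ hxa, slope_comm]
    exact hf.deriv_lt_slope hx hy hxy hfa
  rw [dslope_of_ne _ hxa, dslope_of_ne _ hya, slope_def_field, slope_def_field]
  exact hf.secant_strict_mono ha hx hy hxa hya hxy

theorem Continuous.dslope {𝕜 E : Type*} [NontriviallyNormedField 𝕜] [NormedAddCommGroup E]
    [NormedSpace 𝕜 E] {f : 𝕜 → E} {a : 𝕜} (hf : Continuous f) (hfa : DifferentiableAt 𝕜 f a) :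
    Continuous (dslope f a) := by
  refine continuous_iff_continuousAt.2 fun b ↦ ?_
  rcases eq_or_ne b a with rfl | hba
  · exact continuousAt_dslope_same.2 hfa
  · exact (continuousAt_dslope_of_ne hba).2 hf.continuousAt

end dslope

noncomputable def sphCircumradius (z : ℝ) : ℝ := arcsin (2 / √3 * sin z)
noncomputable def hypCircumradius (w : ℝ) : ℝ := arsinh (2 / √3 * sinh w)

theorem strictAntiOn_sqrt_one_add_inv :
    StrictAntiOn (fun t : ℝ ↦ √(1 + (4 * t ^ 2 - 1)⁻¹)) (Ioi (1 / 2)) := by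
  intro s (hs : 1 / 2 < s) t _ hst
  have hs' : 0 < 4 * s ^ 2 - 1 := by nlinarith
  have ht' : 0 < 4 * t ^ 2 - 1 := by nlinarith
  have hst' : 4 * s ^ 2 - 1 < 4 * t ^ 2 - 1 := by nlinarith
  exact sqrt_lt_sqrt (add_nonneg zero_le_one (inv_nonneg.2 ht'.le)) (by gcongr)

theorem two_div_sqrt_three_sq : (2 / √3) ^ 2 = 4 / 3 := by
  rw [div_pow, sq_sqrt (by norm_num)]; norm_num

-- Both `1 - ((2/√3) sin z)²` and `1 + ((2/√3) sinh w)²` take this form, with `t = cos z`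
-- resp. `t = cosh w`.
theorem div_sqrt_one_sub_eq_sqrt_one_add_inv {t : ℝ} (ht : 1 / 2 < t) :
    2 / √3 * t / √(1 - (2 / √3) ^ 2 * (1 - t ^ 2)) = √(1 + (4 * t ^ 2 - 1)⁻¹) := by
  have h4 : 0 < 4 * t ^ 2 - 1 := by nlinarith
  rw [two_div_sqrt_three_sq, show 1 - 4 / 3 * (1 - t ^ 2) = (4 * t ^ 2 - 1) / 3 by ring,
    ← sqrt_sq (by positivity : 0 ≤ 2 / √3 * t / √((4 * t ^ 2 - 1) / 3)),
    div_pow, mul_pow, two_div_sqrt_three_sq, sq_sqrt (by positivity)]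
  congr 1
  field_simp
  ring

theorem hasDerivAt_sphCircumradius {z : ℝ} (hz : 1 / 2 < cos z) :
    HasDerivAt sphCircumradius √(1 + (4 * cos z ^ 2 - 1)⁻¹) z := by
  have hsq : (2 / √3 * sin z) ^ 2 < 1 := by
    rw [mul_pow, two_div_sqrt_three_sq, sin_sq]; nlinarith
  refine ((hasDerivAt_arcsin (by nlinarith) (by nlinarith)).comp z
    ((hasDerivAt_sin z).const_mul (2 / √3))).congr_deriv ?_
  rw [← div_sqrt_one_sub_eq_sqrt_one_add_inv hz, mul_pow, sin_sq]
  ring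

theorem hasDerivAt_hypCircumradius (w : ℝ) :
    HasDerivAt hypCircumradius √(1 + (4 * cosh w ^ 2 - 1)⁻¹) w := by
  refine ((hasDerivAt_arsinh (2 / √3 * sinh w)).comp w
    ((hasDerivAt_sinh w).const_mul (2 / √3))).congr_deriv ?_
  rw [← div_sqrt_one_sub_eq_sqrt_one_add_inv (by linarith [one_le_cosh w]), inv_mul_eq_div,
    mul_pow, sinh_sq]
  congr 2
  ring

theorem continuous_sphCircumradius : Continuous sphCircumradius := by
  unfold sphCircumradius; fun_prop

theorem continuous_hypCircumradius : Continuous hypCircumradius :=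
  continuous_arsinh.comp (continuous_const.mul continuous_sinh)

theorem half_lt_cos_of_mem_Ico {z : ℝ} (hz : z ∈ Ico 0 (π / 3)) : 1 / 2 < cos z := by
  rw [← cos_pi_div_three]
  exact cos_lt_cos_of_nonneg_of_le_pi hz.1 (by linarith [pi_pos]) hz.2

theorem strictConvexOn_sphCircumradius : StrictConvexOn ℝ (Ico 0 (π / 3)) sphCircumradius := by
  refine StrictMonoOn.strictConvexOn_of_deriv (convex_Ico _ _)
    continuous_sphCircumradius.continuousOn ?_
  rw [interior_Ico]
  have hcos : ∀ z ∈ Ioo 0 (π / 3), 1 / 2 < cos z := fun z hz ↦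
    half_lt_cos_of_mem_Ico (Ioo_subset_Ico_self hz)
  refine (strictAntiOn_sqrt_one_add_inv.comp
    (strictAntiOn_cos.mono fun z hz ↦ ⟨hz.1.le, by linarith [hz.2, pi_pos]⟩) hcos).congr ?_
  exact fun z hz ↦ (hasDerivAt_sphCircumradius (hcos z hz)).deriv.symm

theorem strictConcaveOn_hypCircumradius : StrictConcaveOn ℝ (Ici 0) hypCircumradius := by
  refine StrictAntiOn.strictConcaveOn_of_deriv (convex_Ici 0)
    continuous_hypCircumradius.continuousOn ?_
  rw [interior_Ici]
  have hcosh : ∀ w : ℝ, 1 / 2 < cosh w := fun w ↦ by linarith [one_le_cosh w]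
  refine (strictAntiOn_sqrt_one_add_inv.comp_strictMonoOn
    (cosh_strictMonoOn.mono Ioi_subset_Ici_self) fun w _ ↦ hcosh w).congr ?_
  exact fun w _ ↦ (hasDerivAt_hypCircumradius w).deriv.symm

theorem hasDerivAt_sphCircumradius_zero : HasDerivAt sphCircumradius (2 / √3) 0 := by
  convert hasDerivAt_sphCircumradius (z := 0) (by norm_num) using 1
  norm_num

theorem hasDerivAt_hypCircumradius_zero : HasDerivAt hypCircumradius (2 / √3) 0 := by
  convert hasDerivAt_hypCircumradius 0 using 1
  norm_num

section persistenceRatio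

variable {a K : ℝ}

theorem persistenceRatio_of_nonpos (ha : a ≠ 0) (hK : K ≤ 0) :
    persistenceRatio a K = dslope hypCircumradius 0 (a * √(-K) / 2) := by
  rcases hK.eq_or_lt with rfl | hK
  · simp [persistenceRatio, hasDerivAt_hypCircumradius_zero.deriv]
  have hw : a * √(-K) / 2 ≠ 0 := by
    have := sqrt_pos.2 (neg_pos.2 hK)
    positivity
  rw [persistenceRatio, if_pos hK, dslope_of_ne _ hw, slope_def_field, hypCircumradius,
    hypCircumradius, sinh_zero, mul_zero, arsinh_zero, sub_zero, sub_zero]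
  field_simp

theorem persistenceRatio_of_nonneg (ha : a ≠ 0) (hK : 0 ≤ K) :
    persistenceRatio a K = dslope sphCircumradius 0 (a * √K / 2) := by
  rcases hK.eq_or_lt with rfl | hK
  · simp [persistenceRatio, hasDerivAt_sphCircumradius_zero.deriv]
  have hz : a * √K / 2 ≠ 0 := by
    have := sqrt_pos.2 hK
    positivity
  rw [persistenceRatio, if_neg hK.not_gt, if_neg hK.ne', dslope_of_ne _ hz, slope_def_field,
    sphCircumradius, sphCircumradius, sin_zero, mul_zero, arcsin_zero, sub_zero, sub_zero]
  field_simp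

theorem continuous_persistenceRatio (ha : a ≠ 0) : Continuous (persistenceRatio a) := by
  have hsplit : persistenceRatio a = fun K ↦ if K ≤ 0 then dslope hypCircumradius 0 (a * √(-K) / 2)
      else dslope sphCircumradius 0 (a * √K / 2) := by
    funext K
    split_ifs with hK
    · exact persistenceRatio_of_nonpos ha hK
    · exact persistenceRatio_of_nonneg ha (not_le.1 hK).le
  rw [hsplit]
  refine Continuous.if_le ?_ ?_ continuous_id continuous_const ?_
  · exact (continuous_hypCircumradius.dslope
      hasDerivAt_hypCircumradius_zero.differentiableAt).comp (by fun_prop)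
  · exact (continuous_sphCircumradius.dslope
      hasDerivAt_sphCircumradius_zero.differentiableAt).comp (by fun_prop)
  · rintro K rfl
    simp [hasDerivAt_hypCircumradius_zero.deriv, hasDerivAt_sphCircumradius_zero.deriv]

theorem strictMonoOn_persistenceRatio_Iic (ha : 0 < a) :
    StrictMonoOn (persistenceRatio a) (Iic 0) := by
  have hw : StrictAntiOn (fun K ↦ a * √(-K) / 2) (Iic 0) := fun x _ y hy hxy ↦ by
    dsimp only
    gcongr
    exact neg_nonneg.2 hy
  refine ((strictConcaveOn_hypCircumradius.strictAntiOn_dslope self_mem_Ici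
    hasDerivAt_hypCircumradius_zero.differentiableAt).comp hw
    fun K _ ↦ mem_Ici.2 (by positivity)).congr ?_
  exact fun K hK ↦ (persistenceRatio_of_nonpos ha.ne' hK).symm

theorem mul_sqrt_div_two_lt_pi_div_three (ha : 0 < a) (hK : K < (2 * π / (3 * a)) ^ 2) :
    a * √K / 2 < π / 3 := by
  have hsqrt : √K < 2 * π / (3 * a) := (sqrt_lt' (by positivity)).2 hK
  calc a * √K / 2 < a * (2 * π / (3 * a)) / 2 := by gcongr
    _ = π / 3 := by field_simp

theorem strictMonoOn_persistenceRatio_Ico (ha : 0 < a) :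
    StrictMonoOn (persistenceRatio a) (Ico 0 ((2 * π / (3 * a)) ^ 2)) := by
  have hz : StrictMonoOn (fun K ↦ a * √K / 2) (Ico 0 ((2 * π / (3 * a)) ^ 2)) :=
    fun x hx y _ hxy ↦ by
      dsimp only
      gcongr
      exact hx.1
  refine ((strictConvexOn_sphCircumradius.strictMonoOn_dslope (left_mem_Ico.2 (by positivity))
    hasDerivAt_sphCircumradius_zero.differentiableAt).comp hz
    fun K hK ↦ ⟨by positivity, mul_sqrt_div_two_lt_pi_div_three ha hK.2⟩).congr ?_
  exact fun K hK ↦ (persistenceRatio_of_nonneg ha.ne' hK.1).symm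

end persistenceRatio

/-- For fixed `a > 0`, the persistence ratio `p(K)` is continuous and strictly increasing on its
domain `(−∞, (2π/(3a))²)`, hence injective there. -/
theorem persistenceRatio_continuous_strictMono (a : ℝ) (ha : 0 < a) :
    ContinuousOn (persistenceRatio a) (Set.Iio ((2 * π / (3 * a)) ^ 2)) ∧
    StrictMonoOn (persistenceRatio a) (Set.Iio ((2 * π / (3 * a)) ^ 2)) ∧
    Set.InjOn (persistenceRatio a) (Set.Iio ((2 * π / (3 * a)) ^ 2)) := by
  have hB : (0 : ℝ) < (2 * π / (3 * a)) ^ 2 := by positivity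
  have hmono := (strictMonoOn_persistenceRatio_Iic ha).union
    (strictMonoOn_persistenceRatio_Ico ha) isGreatest_Iic (isLeast_Ico hB)
  rw [Iic_union_Ico_eq_Iio hB] at hmono
  exact ⟨(continuous_persistenceRatio ha.ne').continuousOn, hmono, hmono.injOn⟩
end
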